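/- Let l ≥ 2, p ≥ 1, and n_1, …, n_l ≥ 1. If n_i < 3 for some i ∈ {1, …, l − 1}, or if n_l = 1, then for every choice of weights and biases, the number of knots of the output of the l-layer ℝ → ℝ^p ReLU neural network with n_i neurons in layer i is strictly less than Σ_{i=1}^{l} n_i ∏_{j=i+1}^{l} (n_j + 1); that is, the upper bound is not tight. -/

import Mathlib

/-- The rectified linear unit `σ(x) = max(0, x)`. -/
noncomputable def relu (x : ℝ) : ℝ := max 0 x

/-- Outputs of hidden layer `i` (0-indexed, so layer `i` of the paper is index `i - 1`)
of a fully-connected feedforward ReLU network with scalar input.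
`n i` is the number of neurons in (0-indexed) layer `i`,
`w1 b1` are the input weights and biases of the first hidden layer, and
`w i`, `b i` are the weights and biases mapping layer `i` to layer `i + 1`. -/
noncomputable def layerOut (n : ℕ → ℕ)
    (w1 b1 : Fin (n 0) → ℝ)
    (w : (i : ℕ) → Fin (n (i + 1)) → Fin (n i) → ℝ)
    (b : (i : ℕ) → Fin (n (i + 1)) → ℝ) :
    (i : ℕ) → ℝ → Fin (n i) → ℝ
  | 0 => fun x k => relu (w1 k * x + b1 k)
  | (i + 1) => fun x k =>
      relu ((∑ j, w i k j * layerOut n w1 b1 w b i x j) + b i k)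

/-- The output `y : ℝ → ℝ^p` of an `l`-layer ReLU network (`l ≥ 1`), with output
weights `wOut` and output biases `bOut` applied to the last hidden layer `l - 1`. -/
noncomputable def netOut (l p : ℕ) (n : ℕ → ℕ)
    (w1 b1 : Fin (n 0) → ℝ)
    (w : (i : ℕ) → Fin (n (i + 1)) → Fin (n i) → ℝ)
    (b : (i : ℕ) → Fin (n (i + 1)) → ℝ)
    (wOut : Fin p → Fin (n (l - 1)) → ℝ) (bOut : Fin p → ℝ)
    (x : ℝ) : Fin p → ℝ :=
  fun k => (∑ j, wOut k j * layerOut n w1 b1 w b (l - 1) x j) + bOut k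


/-!
Every neuron is a continuous piecewise-affine function of the input. If the neurons of a layer
are affine on each gap of a finite set `K`, then `relu` of an affine combination of them gets at
most one new breakpoint per gap, so the next layer has its breakpoints in a set of size at most
`|K| + n (|K| + 1)`. Iterating gives the bound `∑ nᵢ ∏_{j > i} (nⱼ + 1)`, and a deficit of one
at some layer persists up to the last one.

A narrow layer creates such a deficit. A single neuron either vanishes on a whole gap, where
every neuron of the next layer is then constant, or never cuts its preactivation and adds no
breakpoint. For two neurons with kinks `z₁ < z₂` in one gap, an affine combination is affine
on the three pieces with slopes `β`, `α + β`, `α` (or constant on one of them) and cannot change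
sign on all three; without such a pair the two neurons add at most one breakpoint per gap. A
single last neuron either drops a breakpoint where its preactivation is negative, or is
nonnegative at all breakpoints and changes sign only in the two unbounded gaps.
-/

open Set

theorem ne_zero_and_eq_zero_of_mem_frontier {U : Set ℝ} {g : ℝ → ℝ} {a b y : ℝ} (hU : IsOpen U)
    (hg : EqOn g (fun x => a * x + b) U) (hy : y ∈ U) (hfr : y ∈ frontier {x | 0 < g x}) :
    a ≠ 0 ∧ a * y + b = 0 := by
  have hloc : y ∈ frontier {x | 0 < a * x + b} ∩ U := by
    have hset : {x | 0 < g x} ∩ U = {x | 0 < a * x + b} ∩ U := by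
      ext x
      exact and_congr_left fun hx => iff_of_eq (congrArg (0 < ·) (hg hx))
    rw [← frontier_inter_open_inter hU, ← hset, frontier_inter_open_inter hU]
    exact ⟨hfr, hy⟩
  refine ⟨?_, (frontier_lt_subset_eq continuous_const (by fun_prop) hloc.1).symm⟩
  rintro rfl
  by_cases hb : 0 < b <;> simp [hb] at hloc

theorem IsPreconnected.pos_or_nonpos {U : Set ℝ} {g : ℝ → ℝ} (hU : IsPreconnected U)
    (hg : Continuous g) (hfr : ∀ y ∈ U, y ∉ frontier {x | 0 < g x}) :
    (∀ x ∈ U, 0 < g x) ∨ ∀ x ∈ U, g x ≤ 0 := by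
  have hopen : IsOpen {x | 0 < g x} := isOpen_lt continuous_const hg
  rcases (U ∩ {x | 0 < g x}).eq_empty_or_nonempty with h | h
  · exact Or.inr fun x hx => not_lt.1 fun hpos => h.subset ⟨hx, hpos⟩
  · refine Or.inl (hU.subset_of_closure_inter_subset hopen h ?_)
    rintro x ⟨hcl, hx⟩
    by_contra hpos
    exact hfr x hx ⟨hcl, by rwa [hopen.interior_eq]⟩

theorem relu_mul_sub_of_le {p x z : ℝ} (h : x ≤ z) : relu (p * (x - z)) = min p 0 * (x - z) := by
  rcases le_total p 0 with hp | hp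
  · rw [min_eq_left hp]; exact max_eq_right (by nlinarith)
  · rw [min_eq_right hp, zero_mul]; exact max_eq_left (by nlinarith)

theorem relu_mul_sub_of_ge {p x z : ℝ} (h : z ≤ x) : relu (p * (x - z)) = max p 0 * (x - z) := by
  rcases le_total p 0 with hp | hp
  · rw [max_eq_right hp, zero_mul]; exact max_eq_left (by nlinarith)
  · rw [max_eq_left hp]; exact max_eq_right (by nlinarith)

/-- The hypotheses say that `x ↦ d + α * max (x - z₁) 0 + β * min (x - z₂) 0`, whose slopes on
the three pieces cut out by `z₁ < z₂` are `β`, `α + β`, `α`, vanishes on each piece. -/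
theorem add_eq_zero_of_three_roots {α β d z₁ z₂ w₀ w₁ w₂ : ℝ} (h₀ : w₀ < z₁) (h₁ : z₁ < w₁)
    (h₂ : w₁ < z₂) (h₃ : z₂ < w₂) (e₀ : β * (w₀ - z₂) + d = 0)
    (e₁ : α * (w₁ - z₁) + β * (w₁ - z₂) + d = 0) (e₂ : α * (w₂ - z₁) + d = 0) : α + β = 0 := by
  have hD : 0 < (z₁ - w₀) * (z₂ - w₁) + (z₁ - w₀) * (w₂ - z₂) + (w₁ - z₁) * (w₂ - z₂) := by
    have := mul_pos (sub_pos.2 h₀) (sub_pos.2 h₂)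
    have := mul_pos (sub_pos.2 h₀) (sub_pos.2 h₃)
    have := mul_pos (sub_pos.2 h₁) (sub_pos.2 h₃)
    linarith
  have : (α + β) * ((z₁ - w₀) * (z₂ - w₁) + (z₁ - w₀) * (w₂ - z₂) + (w₁ - z₁) * (w₂ - z₂)) = 0 := by
    linear_combination (w₁ - z₂) * (e₁ - e₀) - (w₁ - w₀) * (e₁ - e₂) + (w₁ - z₁) * (e₁ - e₂) -
      (w₁ - w₂) * (e₁ - e₀)
  exact (mul_eq_zero.1 this).resolve_right hD.ne'

namespace ReLUNetwork

/-- The open interval of `ℝ \ A` containing `x`; empty if `x ∈ A`. -/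
def gap (A : Finset ℝ) (x : ℝ) : Set ℝ := {y | ∀ t ∈ A, t ∉ uIcc x y}

/-- Numbers the `A.card + 1` gaps of `A` from left to right. -/
noncomputable def gapIndex (A : Finset ℝ) (x : ℝ) : ℕ := (A.filter (· < x)).card

section Gaps

variable {A s : Finset ℝ} {U : Set ℝ} {t x y z : ℝ}

theorem mem_gap_comm : y ∈ gap A x ↔ x ∈ gap A y := by
  simp [gap, uIcc_comm]

theorem mem_gap_trans (hy : y ∈ gap A x) (hz : z ∈ gap A y) : z ∈ gap A x :=
  fun t ht htz => (uIcc_subset_uIcc_union_uIcc htz).elim (hy t ht) (hz t ht)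

theorem self_mem_gap (hx : x ∉ A) : x ∈ gap A x := fun t ht htx => by
  rw [uIcc_self, mem_singleton_iff] at htx
  exact hx (htx ▸ ht)

theorem notMem_gap (ht : t ∈ A) : t ∉ gap A x := fun h => h t ht right_mem_uIcc

theorem isOpen_gap : IsOpen (gap A x) := by
  have : gap A x = ⋂ t ∈ A, {y | t ∈ uIcc x y}ᶜ := by ext; simp [gap]
  rw [this]
  exact isOpen_biInter_finset fun t _ =>
    ((isClosed_le (continuous_const.min continuous_id) continuous_const).inter
      (isClosed_le continuous_const (continuous_const.max continuous_id))).isOpen_compl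

theorem ordConnected_gap : (gap A x).OrdConnected :=
  ⟨fun _ hy _ hz _ hu => mem_gap_trans hy fun t ht htu =>
    (uIcc_subset_uIcc_union_uIcc (uIcc_subset_uIcc left_mem_uIcc (Icc_subset_uIcc hu) htu)).elim
      (mem_gap_comm.1 hy t ht) (hz t ht)⟩

theorem gap_subset_gap (hsA : s ⊆ A) : gap A x ⊆ gap s x :=
  fun _ hy t ht => hy t (hsA ht)

theorem subset_gap (hU : U.OrdConnected) (hUA : ∀ t ∈ A, t ∉ U) (hx : x ∈ U) : U ⊆ gap A x :=
  fun _ hy t ht htm => hUA t ht (hU.uIcc_subset hx hy htm)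

theorem gap_subset_Iio (hz : z ∈ A) (hxz : x < z) : gap A x ⊆ Iio z :=
  fun _ hy => not_le.1 fun hzy => hy z hz (Icc_subset_uIcc ⟨hxz.le, hzy⟩)

theorem gap_subset_Ioi (hz : z ∈ A) (hzx : z < x) : gap A x ⊆ Ioi z :=
  fun _ hy => not_le.1 fun hyz => hy z hz (Icc_subset_uIcc' ⟨hyz, hzx.le⟩)

theorem gapIndex_le : gapIndex A x ≤ A.card := Finset.card_filter_le _ _

theorem mem_gap_of_gapIndex_eq (hx : x ∉ A) (hy : y ∉ A) (h : gapIndex A x = gapIndex A y) :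
    y ∈ gap A x := by
  wlog hxy : x ≤ y generalizing x y
  · exact mem_gap_comm.2 (this hy hx h.symm (le_of_not_ge hxy))
  have hfilter : A.filter (· < x) = A.filter (· < y) :=
    Finset.eq_of_subset_of_card_le (fun t ht => Finset.mem_filter.2
      ⟨(Finset.mem_filter.1 ht).1, (Finset.mem_filter.1 ht).2.trans_le hxy⟩) h.symm.le
  intro t ht htm
  rw [uIcc_of_le hxy] at htm
  have hty : t ∈ A.filter (· < y) := Finset.mem_filter.2 ⟨ht, htm.2.lt_of_ne fun h => hy (h ▸ ht)⟩
  rw [← hfilter, Finset.mem_filter] at hty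
  exact hty.2.not_ge htm.1

end Gaps

def piecewiseAffine (A : Finset ℝ) : Submodule ℝ (ℝ → ℝ) where
  carrier := {f | Continuous f ∧ ∀ x ∉ A, ∃ a b : ℝ, EqOn f (fun y => a * y + b) (gap A x)}
  add_mem' := by
    rintro f g ⟨hfc, hf⟩ ⟨hgc, hg⟩
    refine ⟨hfc.add hgc, fun x hx => ?_⟩
    obtain ⟨a, b, hab⟩ := hf x hx
    obtain ⟨c, d, hcd⟩ := hg x hx
    exact ⟨a + c, b + d, fun y hy => by simp only [Pi.add_apply, hab hy, hcd hy]; ring⟩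
  zero_mem' := ⟨continuous_const, fun _ _ => ⟨0, 0, fun y _ => by simp⟩⟩
  smul_mem' := by
    rintro c f ⟨hfc, hf⟩
    refine ⟨hfc.const_smul c, fun x hx => ?_⟩
    obtain ⟨a, b, hab⟩ := hf x hx
    exact ⟨c * a, c * b, fun y hy => by simp only [Pi.smul_apply, smul_eq_mul, hab hy]; ring⟩

section PiecewiseAffine

variable {A A' : Finset ℝ} {f g : ℝ → ℝ} {x : ℝ}

theorem piecewiseAffine_mono (h : A ⊆ A') : piecewiseAffine A ≤ piecewiseAffine A' :=
  fun _ hf => ⟨hf.1, fun x hx => (hf.2 x fun hxA => hx (h hxA)).imp fun _ =>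
    Exists.imp fun _ hab => hab.mono (gap_subset_gap h)⟩

theorem affine_mem_piecewiseAffine (a b : ℝ) : (fun x => a * x + b) ∈ piecewiseAffine A :=
  ⟨by fun_prop, fun _ _ => ⟨a, b, eqOn_refl _ _⟩⟩

theorem sum_mul_add_mem_piecewiseAffine {ι : Type*} [Fintype ι] {v : ι → ℝ → ℝ}
    (hv : ∀ j, v j ∈ piecewiseAffine A) (c : ι → ℝ) (d : ℝ) :
    (fun x => ∑ j, c j * v j x + d) ∈ piecewiseAffine A := by
  have : (fun x => ∑ j, c j * v j x + d) = ∑ j, c j • v j + fun x => 0 * x + d := by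
    ext x; simp [Finset.sum_apply]
  rw [this]
  exact add_mem (sum_mem fun j _ => Submodule.smul_mem _ _ (hv j)) (affine_mem_piecewiseAffine 0 d)

theorem differentiableAt_of_mem_piecewiseAffine (hf : f ∈ piecewiseAffine A) (hx : x ∉ A) :
    DifferentiableAt ℝ f x := by
  obtain ⟨a, b, hab⟩ := hf.2 x hx
  exact (show DifferentiableAt ℝ (fun y => a * y + b) x by fun_prop).congr_of_eventuallyEq
    (hab.eventuallyEq_of_mem (isOpen_gap.mem_nhds (self_mem_gap hx)))

end PiecewiseAffine

section Frontier

variable {A Z : Finset ℝ} {g : ℝ → ℝ} {z : ℝ}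

theorem exists_eqOn_mul_sub_of_mem_frontier (hg : g ∈ piecewiseAffine A)
    (hz : z ∈ frontier {x | 0 < g x}) (hzA : z ∉ A) :
    ∃ p ≠ 0, EqOn g (fun x => p * (x - z)) (gap A z) := by
  obtain ⟨a, b, hab⟩ := hg.2 z hzA
  obtain ⟨ha, hz0⟩ := ne_zero_and_eq_zero_of_mem_frontier isOpen_gap hab (self_mem_gap hzA) hz
  exact ⟨a, ha, fun x hx => by rw [hab hx]; linear_combination hz0⟩

theorem injOn_gapIndex (hg : g ∈ piecewiseAffine A) :
    InjOn (gapIndex A) (frontier {x | 0 < g x} \ ↑A) := by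
  rintro z ⟨hz, hzA⟩ z' ⟨hz', hz'A⟩ h
  obtain ⟨p, hp, hpz⟩ := exists_eqOn_mul_sub_of_mem_frontier hg hz hzA
  have h0 := (ne_zero_and_eq_zero_of_mem_frontier (b := -(p * z)) isOpen_gap
    (fun x hx => by rw [hpz hx]; ring) (mem_gap_of_gapIndex_eq hzA hz'A h) hz').2
  exact (mul_left_cancel₀ hp (by linear_combination h0 : p * z' = p * z)).symm

theorem finite_frontier_diff (hg : g ∈ piecewiseAffine A) :
    (frontier {x | 0 < g x} \ ↑A).Finite :=
  Finite.of_finite_image ((finite_Iic A.card).subset (by rintro _ ⟨z, -, rfl⟩; exact gapIndex_le))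
    (injOn_gapIndex hg)

theorem card_le_card_add_one_of_injOn (h : InjOn (gapIndex A) Z) : Z.card ≤ A.card + 1 := by
  simpa using Finset.card_le_card_of_injOn (t := Finset.range (A.card + 1)) _
    (fun z _ => Finset.mem_range.2 (Nat.lt_succ_of_le gapIndex_le)) h

/-- `frontier {z | 0 < h z}` is where `relu ∘ h` can acquire new breakpoints. -/
def MissesGap (A : Finset ℝ) (h : ℝ → ℝ) : Prop :=
  ∃ x ∉ A, ∀ y ∈ gap A x, y ∉ frontier {z | 0 < h z}

theorem card_le_of_missesGap (hg : g ∈ piecewiseAffine A) (hm : MissesGap A g)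
    (hZ : ↑Z ⊆ frontier {x | 0 < g x} \ ↑A) : Z.card ≤ A.card := by
  obtain ⟨x, hxA, hx⟩ := hm
  have hmem : gapIndex A x ∈ Finset.range (A.card + 1) :=
    Finset.mem_range.2 (Nat.lt_succ_of_le gapIndex_le)
  have := Finset.card_le_card_of_injOn (t := (Finset.range (A.card + 1)).erase (gapIndex A x)) _
    (fun z hz => Finset.mem_erase.2 ⟨fun h => hx z (mem_gap_of_gapIndex_eq hxA (hZ hz).2 h.symm)
      (hZ hz).1, Finset.mem_range.2 (Nat.lt_succ_of_le gapIndex_le)⟩)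
    ((injOn_gapIndex hg).mono hZ)
  simpa [Finset.card_erase_of_mem hmem] using this

end Frontier

section Relu

variable {A Z : Finset ℝ} {g : ℝ → ℝ} {κ : Type*} [Fintype κ] {H : κ → ℝ → ℝ}

theorem relu_comp_mem_piecewiseAffine (hg : g ∈ piecewiseAffine A)
    (hZ : frontier {x | 0 < g x} \ ↑A ⊆ ↑Z) :
    (fun x => relu (g x)) ∈ piecewiseAffine (A.filter (fun t => 0 ≤ g t) ∪ Z) := by
  have hgc := hg.1
  refine ⟨continuous_const.max hgc, fun x hx => ?_⟩
  have hfr : ∀ y ∈ gap (A.filter (fun t => 0 ≤ g t) ∪ Z) x, y ∉ frontier {x | 0 < g x} := by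
    intro y hy hyf
    refine notMem_gap ?_ hy
    by_cases hyA : y ∈ A
    · exact Finset.mem_union_left _
        (Finset.mem_filter.2 ⟨hyA, (frontier_lt_subset_eq continuous_const hgc hyf).le⟩)
    · exact Finset.mem_union_right _ (hZ ⟨hyf, hyA⟩)
  rcases ordConnected_gap.isPreconnected.pos_or_nonpos hgc hfr with hpos | hneg
  · have hsub : gap (A.filter (fun t => 0 ≤ g t) ∪ Z) x ⊆ gap A x :=
      subset_gap ordConnected_gap (fun t ht hmem => notMem_gap
        (Finset.mem_union_left _ (Finset.mem_filter.2 ⟨ht, (hpos t hmem).le⟩)) hmem)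
        (self_mem_gap hx)
    obtain ⟨a, b, hab⟩ := hg.2 x fun h => notMem_gap h (hsub (self_mem_gap hx))
    exact ⟨a, b, fun y hy => (max_eq_right (hpos y hy).le).trans (hab (hsub hy))⟩
  · exact ⟨0, 0, fun y hy => (max_eq_left (hneg y hy)).trans (by ring)⟩

theorem exists_relu_mem_of_card_le (hH : ∀ k, H k ∈ piecewiseAffine A) {N : ℕ}
    (hN : ∀ k (Z : Finset ℝ), ↑Z ⊆ frontier {x | 0 < H k x} \ ↑A → Z.card ≤ N) :
    ∃ A' : Finset ℝ, (∀ k, (fun x => relu (H k x)) ∈ piecewiseAffine A') ∧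
      A'.card ≤ A.card + Fintype.card κ * N := by
  classical
  choose Z hZ using fun k => (finite_frontier_diff (hH k)).exists_finset_coe
  refine ⟨A ∪ Finset.univ.biUnion Z, fun k => piecewiseAffine_mono ?_
    (relu_comp_mem_piecewiseAffine (hH k) (hZ k).ge), ?_⟩
  · exact Finset.union_subset_union (Finset.filter_subset _ _)
      (Finset.subset_biUnion_of_mem Z (Finset.mem_univ k))
  · calc (A ∪ Finset.univ.biUnion Z).card ≤ A.card + ∑ k, (Z k).card :=
          (Finset.card_union_le _ _).trans (Nat.add_le_add_left Finset.card_biUnion_le _)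
      _ ≤ A.card + ∑ _k : κ, N := by gcongr with k; exact hN k (Z k) (hZ k).le
      _ = A.card + Fintype.card κ * N := by rw [Finset.sum_const, Finset.card_univ, smul_eq_mul]

theorem exists_relu_mem (hH : ∀ k, H k ∈ piecewiseAffine A) :
    ∃ A' : Finset ℝ, (∀ k, (fun x => relu (H k x)) ∈ piecewiseAffine A') ∧
      A'.card ≤ A.card + Fintype.card κ * (A.card + 1) :=
  exists_relu_mem_of_card_le hH fun k _ hZ =>
    card_le_card_add_one_of_injOn ((injOn_gapIndex (hH k)).mono hZ)

theorem exists_relu_mem_of_missesGap (hH : ∀ k, H k ∈ piecewiseAffine A)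
    (hm : ∀ k, MissesGap A (H k)) :
    ∃ A' : Finset ℝ, (∀ k, (fun x => relu (H k x)) ∈ piecewiseAffine A') ∧
      A'.card ≤ A.card + Fintype.card κ * A.card :=
  exists_relu_mem_of_card_le hH fun k _ hZ => card_le_of_missesGap (hH k) (hm k) hZ

end Relu

section NarrowLayer

variable {A s : Finset ℝ} {h : ℝ → ℝ}

theorem exists_root_of_not_missesGap (hm : ¬ MissesGap A h) {U : Set ℝ} (hU : IsOpen U)
    (hne : U.Nonempty) (hsat : ∀ x ∈ U, x ∉ A → gap A x ⊆ U) {a b : ℝ}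
    (hab : EqOn h (fun x => a * x + b) U) : ∃ w ∈ U, a ≠ 0 ∧ a * w + b = 0 := by
  obtain ⟨w, hwU, hw⟩ : ∃ w ∈ U, w ∈ frontier {x | 0 < h x} := by
    by_contra! hno
    obtain ⟨y, hy⟩ := hne
    obtain ⟨x, hxU, hxA⟩ := (infinite_of_mem_nhds y (hU.mem_nhds hy)).exists_notMem_finset A
    exact hm ⟨x, hxA, fun z hz => hno z (hsat x hxU hxA hz)⟩
  exact ⟨w, hwU, ne_zero_and_eq_zero_of_mem_frontier hU hab hwU hw⟩

/-- Two kinks `z₁ < z₂` of a width-two layer inside one gap of `s` cut that gap into three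
pieces, and every affine combination of the two neurons misses one of them. -/
theorem missesGap_of_three_pieces (hsA : s ⊆ A) {z₁ z₂ : ℝ} (hz₁ : z₁ ∈ A) (hz₂ : z₂ ∈ A)
    (hz₁s : z₁ ∉ s) (h₁₂ : z₁ < z₂) (hz₂T : z₂ ∈ gap s z₁) {p₁ p₂ c₁ c₂ d : ℝ} (hp₁ : p₁ ≠ 0)
    (hp₂ : p₂ ≠ 0)
    (hh : ∀ x ∈ gap s z₁, h x = c₁ * relu (p₁ * (x - z₁)) + c₂ * relu (p₂ * (x - z₂)) + d) :
    MissesGap A h := by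
  have hT : IsOpen (gap s z₁) := isOpen_gap
  have hz₁T := self_mem_gap hz₁s
  have hsat : ∀ x ∈ gap s z₁, x ∉ A → gap A x ⊆ gap s z₁ :=
    fun x hx _ _ hy => mem_gap_trans hx (gap_subset_gap hsA hy)
  have hmid : Ioo z₁ z₂ ⊆ gap s z₁ := Ioo_subset_Icc_self.trans (ordConnected_gap.out hz₁T hz₂T)
  by_contra hm
  obtain ⟨w₀, hw₀, ha₀, e₀⟩ := exists_root_of_not_missesGap hm (isOpen_Iio.inter hT)
    (Filter.nonempty_of_mem (inter_mem_nhdsWithin _ (hT.mem_nhds hz₁T)))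
    (fun x hx hxA => subset_inter (gap_subset_Iio hz₁ hx.1) (hsat x hx.2 hxA))
    (a := c₁ * min p₁ 0 + c₂ * min p₂ 0) (b := d - c₁ * min p₁ 0 * z₁ - c₂ * min p₂ 0 * z₂)
    fun x hx => by
      rw [hh x hx.2, relu_mul_sub_of_le hx.1.le, relu_mul_sub_of_le (hx.1.le.trans h₁₂.le)]; ring
  obtain ⟨w₁, hw₁, ha₁, e₁⟩ := exists_root_of_not_missesGap hm isOpen_Ioo (nonempty_Ioo.2 h₁₂)
    (fun x hx hxA y hy => ⟨gap_subset_Ioi hz₁ hx.1 hy, gap_subset_Iio hz₂ hx.2 hy⟩)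
    (a := c₁ * max p₁ 0 + c₂ * min p₂ 0) (b := d - c₁ * max p₁ 0 * z₁ - c₂ * min p₂ 0 * z₂)
    fun x hx => by
      rw [hh x (hmid hx), relu_mul_sub_of_ge hx.1.le, relu_mul_sub_of_le hx.2.le]; ring
  obtain ⟨w₂, hw₂, ha₂, e₂⟩ := exists_root_of_not_missesGap hm (isOpen_Ioi.inter hT)
    (Filter.nonempty_of_mem (inter_mem_nhdsWithin _ (hT.mem_nhds hz₂T)))
    (fun x hx hxA => subset_inter (gap_subset_Ioi hz₂ hx.1) (hsat x hx.2 hxA))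
    (a := c₁ * max p₁ 0 + c₂ * max p₂ 0) (b := d - c₁ * max p₁ 0 * z₁ - c₂ * max p₂ 0 * z₂)
    fun x hx => by
      rw [hh x hx.2, relu_mul_sub_of_ge (h₁₂.le.trans hx.1.le), relu_mul_sub_of_ge hx.1.le]; ring
  rcases hp₁.lt_or_gt with hp₁ | hp₁ <;> rcases hp₂.lt_or_gt with hp₂ | hp₂
  · simp [max_eq_right hp₁.le, max_eq_right hp₂.le] at ha₂
  · simp [max_eq_right hp₁.le, min_eq_right hp₂.le] at ha₁
  · simp only [min_eq_right hp₁.le, max_eq_left hp₁.le, min_eq_left hp₂.le,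
      max_eq_right hp₂.le] at ha₁ e₀ e₁ e₂
    exact ha₁ (add_eq_zero_of_three_roots (d := d) hw₀.1 hw₁.1 hw₁.2 hw₂.1
      (by linear_combination e₀) (by linear_combination e₁) (by linear_combination e₂))
  · simp [min_eq_right hp₁.le, min_eq_right hp₂.le] at ha₀

variable {g g₁ g₂ : ℝ → ℝ}

theorem missesGap_of_cross (hg₁ : g₁ ∈ piecewiseAffine s) (hg₂ : g₂ ∈ piecewiseAffine s)
    (hsA : s ⊆ A) {z₁ z₂ : ℝ} (hz₁ : z₁ ∈ frontier {x | 0 < g₁ x})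
    (hz₂ : z₂ ∈ frontier {x | 0 < g₂ x}) (hz₁A : z₁ ∈ A) (hz₂A : z₂ ∈ A) (hz₁s : z₁ ∉ s)
    (hne : z₁ ≠ z₂) (hgap : z₂ ∈ gap s z₁) (c₁ c₂ d : ℝ) :
    MissesGap A (fun x => c₁ * relu (g₁ x) + c₂ * relu (g₂ x) + d) := by
  wlog h₁₂ : z₁ < z₂ generalizing g₁ g₂ z₁ z₂ c₁ c₂
  · have := this hg₂ hg₁ hz₂ hz₁ hz₂A hz₁A (fun h => notMem_gap h hgap) hne.symm
      (mem_gap_comm.2 hgap) c₂ c₁ (hne.symm.lt_of_le (not_lt.1 h₁₂))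
    simpa only [add_comm (c₂ * _)] using this
  obtain ⟨p₁, hp₁, hgz₁⟩ := exists_eqOn_mul_sub_of_mem_frontier hg₁ hz₁ hz₁s
  obtain ⟨p₂, hp₂, hgz₂⟩ :=
    exists_eqOn_mul_sub_of_mem_frontier hg₂ hz₂ fun h => notMem_gap h hgap
  exact missesGap_of_three_pieces hsA hz₁A hz₂A hz₁s h₁₂ hgap hp₁ hp₂ fun x hx => by
    rw [hgz₁ hx, hgz₂ (mem_gap_trans (mem_gap_comm.1 hgap) hx)]

theorem exists_narrow_one (hg : g ∈ piecewiseAffine s) :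
    ∃ A : Finset ℝ, (fun x => relu (g x)) ∈ piecewiseAffine A ∧
      (A.card < 2 * s.card + 1 ∨
        A.card ≤ 2 * s.card + 1 ∧ ∀ c d : ℝ, MissesGap A (fun x => c * relu (g x) + d)) := by
  classical
  have hgc := hg.1
  obtain ⟨Z, hZ⟩ := (finite_frontier_diff hg).exists_finset_coe
  have hZcard := card_le_card_add_one_of_injOn ((injOn_gapIndex hg).mono hZ.le)
  by_cases hneg : ∃ x ∉ s ∪ Z, g x ≤ 0
  · obtain ⟨x, hx, hgx⟩ := hneg
    refine ⟨s ∪ Z, piecewiseAffine_mono (Finset.union_subset_union (Finset.filter_subset _ s)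
      subset_rfl) (relu_comp_mem_piecewiseAffine hg hZ.ge),
      Or.inr ⟨(Finset.card_union_le _ _).trans (by omega), fun c d => ⟨x, hx, fun y hy hyf => ?_⟩⟩⟩
    have hfr : ∀ y ∈ gap (s ∪ Z) x, y ∉ frontier {x | 0 < g x} := fun y hy hyf => by
      by_cases hys : y ∈ s
      · exact notMem_gap (Finset.mem_union_left _ hys) hy
      · exact notMem_gap (Finset.mem_union_right _ (hZ.ge ⟨hyf, hys⟩)) hy
    -- `relu ∘ g` vanishes on the gap of `x`, so the combination is constant there
    have hle := (ordConnected_gap.isPreconnected.pos_or_nonpos hgc hfr).resolve_left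
      fun h => (h x (self_mem_gap hx)).not_ge hgx
    exact (ne_zero_and_eq_zero_of_mem_frontier isOpen_gap (a := 0) (b := d)
      (fun z hz => by simp [relu, max_eq_left (hle z hz)]) hy hyf).1 rfl
  · push Not at hneg
    have hnn : ∀ x, 0 ≤ g x := by
      have h := closure_minimal (s := (↑(s ∪ Z) : Set ℝ)ᶜ) (t := {x | 0 ≤ g x})
        (fun x hx => (hneg x hx).le) (isClosed_le continuous_const hgc)
      rw [(Countable.dense_compl ℝ (s ∪ Z).countable_toSet).closure_eq] at h
      exact fun x => h (mem_univ x)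
    have hrelu : (fun x => relu (g x)) = g := funext fun x => max_eq_right (hnn x)
    exact ⟨s, by rwa [hrelu], Or.inl (by omega)⟩

theorem exists_narrow_two (hg₁ : g₁ ∈ piecewiseAffine s) (hg₂ : g₂ ∈ piecewiseAffine s) :
    ∃ A : Finset ℝ, (fun x => relu (g₁ x)) ∈ piecewiseAffine A ∧
      (fun x => relu (g₂ x)) ∈ piecewiseAffine A ∧
      (A.card < 3 * s.card + 2 ∨ A.card ≤ 3 * s.card + 2 ∧
        ∀ c₁ c₂ d : ℝ, MissesGap A (fun x => c₁ * relu (g₁ x) + c₂ * relu (g₂ x) + d)) := by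
  classical
  obtain ⟨Z₁, hZ₁⟩ := (finite_frontier_diff hg₁).exists_finset_coe
  obtain ⟨Z₂, hZ₂⟩ := (finite_frontier_diff hg₂).exists_finset_coe
  have hZ₁card := card_le_card_add_one_of_injOn ((injOn_gapIndex hg₁).mono hZ₁.le)
  have hZ₂card := card_le_card_add_one_of_injOn ((injOn_gapIndex hg₂).mono hZ₂.le)
  refine ⟨s ∪ (Z₁ ∪ Z₂),
    piecewiseAffine_mono (Finset.union_subset_union (Finset.filter_subset _ s)
      Finset.subset_union_left) (relu_comp_mem_piecewiseAffine hg₁ hZ₁.ge),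
    piecewiseAffine_mono (Finset.union_subset_union (Finset.filter_subset _ s)
      Finset.subset_union_right) (relu_comp_mem_piecewiseAffine hg₂ hZ₂.ge), ?_⟩
  have hunion := (Finset.card_union_le s (Z₁ ∪ Z₂)).trans
    (Nat.add_le_add_left (Finset.card_union_le Z₁ Z₂) _)
  by_cases hcross : ∃ z₁ ∈ Z₁, ∃ z₂ ∈ Z₂, z₁ ≠ z₂ ∧ z₂ ∈ gap s z₁
  · obtain ⟨z₁, hz₁, z₂, hz₂, hne, hgap⟩ := hcross
    have hz₁' := hZ₁.le (Finset.mem_coe.2 hz₁)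
    refine Or.inr ⟨by omega, fun c₁ c₂ d => missesGap_of_cross hg₁ hg₂ Finset.subset_union_left
      hz₁'.1 (hZ₂.le (Finset.mem_coe.2 hz₂)).1 (by simp [hz₁]) (by simp [hz₂]) hz₁'.2 hne hgap
      c₁ c₂ d⟩
  · have hinj : InjOn (gapIndex s) ↑(Z₁ ∪ Z₂) := by
      intro z hz z' hz' h
      rw [Finset.coe_union] at hz hz'
      rcases hz with hz | hz <;> rcases hz' with hz' | hz'
      · exact ((injOn_gapIndex hg₁).mono hZ₁.le) hz hz' h
      · by_contra hne
        exact hcross ⟨z, hz, z', hz', hne, mem_gap_of_gapIndex_eq (hZ₁.le hz).2 (hZ₂.le hz').2 h⟩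
      · by_contra hne
        exact hcross ⟨z', hz', z, hz, Ne.symm hne,
          mem_gap_of_gapIndex_eq (hZ₁.le hz').2 (hZ₂.le hz).2 h.symm⟩
      · exact ((injOn_gapIndex hg₂).mono hZ₂.le) hz hz' h
    have := card_le_card_add_one_of_injOn hinj
    exact Or.inl ((Finset.card_union_le _ _).trans_lt (by omega))


theorem exists_narrow {κ : Type*} [Fintype κ] (hκ : Fintype.card κ = 1 ∨ Fintype.card κ = 2)
    {g : κ → ℝ → ℝ} (hg : ∀ j, g j ∈ piecewiseAffine s) :
    ∃ A : Finset ℝ, (∀ j, (fun x => relu (g j x)) ∈ piecewiseAffine A) ∧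
      (A.card < (Fintype.card κ + 1) * s.card + Fintype.card κ ∨
        A.card ≤ (Fintype.card κ + 1) * s.card + Fintype.card κ ∧
          ∀ (c : κ → ℝ) (d : ℝ), MissesGap A (fun x => ∑ j, c j * relu (g j x) + d)) := by
  classical
  rcases hκ with hκ | hκ
  · obtain ⟨j₀, hj₀⟩ := Fintype.card_eq_one_iff.1 hκ
    obtain ⟨A, hA, hcard⟩ := exists_narrow_one (hg j₀)
    have hsum (c : κ → ℝ) (x : ℝ) : ∑ j, c j * relu (g j x) = c j₀ * relu (g j₀ x) :=
      Fintype.sum_eq_single j₀ fun j hj => absurd (hj₀ j) hj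
    refine ⟨A, fun j => hj₀ j ▸ hA, ?_⟩
    rw [hκ]
    rcases hcard with hlt | ⟨hle, hm⟩
    · exact Or.inl (by omega)
    · exact Or.inr ⟨by omega, fun c d => by simpa only [hsum] using hm (c j₀) d⟩
  · obtain ⟨j₀, j₁, hne, huniv⟩ := Finset.card_eq_two.1 (Finset.card_univ.trans hκ)
    obtain ⟨A, hA₀, hA₁, hcard⟩ := exists_narrow_two (hg j₀) (hg j₁)
    have hj (j : κ) : j = j₀ ∨ j = j₁ := by simpa [huniv] using Finset.mem_univ j
    refine ⟨A, fun j => (hj j).elim (· ▸ hA₀) (· ▸ hA₁), ?_⟩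
    rw [hκ]
    rcases hcard with hlt | ⟨hle, hm⟩
    · exact Or.inl (by omega)
    · exact Or.inr ⟨by omega, fun c d => by
        simpa only [huniv, Finset.sum_pair hne] using hm (c j₀) (c j₁) d⟩

end NarrowLayer

section LastNeuron

variable {s : Finset ℝ} {g : ℝ → ℝ}

theorem exists_neg_of_mem_frontier_of_between (hg : g ∈ piecewiseAffine s) {z : ℝ}
    (hz : z ∈ frontier {x | 0 < g x}) (hzs : z ∉ s) (hbelow : ∃ a ∈ s, a < z)
    (habove : ∃ b ∈ s, z < b) : ∃ t ∈ s, g t < 0 := by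
  classical
  have hne₁ : (s.filter (· < z)).Nonempty := by simpa [Finset.filter_nonempty_iff] using hbelow
  have hne₂ : (s.filter (z < ·)).Nonempty := by simpa [Finset.filter_nonempty_iff] using habove
  set a := (s.filter (· < z)).max' hne₁
  set b := (s.filter (z < ·)).min' hne₂
  obtain ⟨has, haz⟩ := Finset.mem_filter.1 ((s.filter (· < z)).max'_mem hne₁)
  obtain ⟨hbs, hzb⟩ := Finset.mem_filter.1 ((s.filter (z < ·)).min'_mem hne₂)
  have hfree : ∀ t ∈ s, t ∉ Ioo a b := fun t ht htab => by
    rcases lt_trichotomy t z with htz | rfl | hzt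
    · exact htab.1.not_ge ((s.filter (· < z)).le_max' t (Finset.mem_filter.2 ⟨ht, htz⟩))
    · exact hzs ht
    · exact htab.2.not_ge ((s.filter (z < ·)).min'_le t (Finset.mem_filter.2 ⟨ht, hzt⟩))
  obtain ⟨p, hp, hpz⟩ := exists_eqOn_mul_sub_of_mem_frontier hg hz hzs
  have hIcc : EqOn g (fun x => p * (x - z)) (Icc a b) := by
    rw [← closure_Ioo (haz.trans hzb).ne]
    exact (hpz.mono (subset_gap ordConnected_Ioo hfree ⟨haz, hzb⟩)).closure
      hg.1 (by fun_prop)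
  rcases hp.lt_or_gt with hp | hp
  · exact ⟨b, hbs, by rw [hIcc (right_mem_Icc.2 (haz.trans hzb).le)]; nlinarith⟩
  · exact ⟨a, has, by rw [hIcc (left_mem_Icc.2 (haz.trans hzb).le)]; nlinarith⟩

/-- Sign changes of `g` can then only occur in the two unbounded gaps. -/
theorem card_le_two_of_nonneg (hg : g ∈ piecewiseAffine s) (hnn : ∀ t ∈ s, 0 ≤ g t)
    {Z : Finset ℝ} (hZ : ↑Z ⊆ frontier {x | 0 < g x} \ ↑s) : Z.card ≤ 2 := by
  classical
  have hends : ∀ z ∈ Z, gapIndex s z ∈ ({0, s.card} : Finset ℕ) := by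
    intro z hz
    obtain ⟨hzf, hzs⟩ := hZ hz
    by_contra hmid
    simp only [Finset.mem_insert, Finset.mem_singleton, not_or] at hmid
    obtain ⟨t, ht, hgt⟩ := exists_neg_of_mem_frontier_of_between hg hzf hzs
      (by simpa [gapIndex, Finset.filter_nonempty_iff] using
        Finset.card_pos.1 (Nat.pos_of_ne_zero hmid.1))
      (by
        by_contra! hle
        exact hmid.2 (congrArg Finset.card (Finset.filter_true_of_mem fun t ht =>
          (hle t ht).lt_of_ne fun h => hzs (h ▸ ht))))
    exact (hnn t ht).not_gt hgt
  exact (Finset.card_le_card_of_injOn _ hends ((injOn_gapIndex hg).mono hZ)).trans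
    Finset.card_le_two

theorem exists_relu_mem_card_le_two_mul (hg : g ∈ piecewiseAffine s) {B : ℕ} (hs : s.card ≤ B)
    (hB : 2 ≤ B) : ∃ A : Finset ℝ, (fun x => relu (g x)) ∈ piecewiseAffine A ∧ A.card ≤ 2 * B := by
  classical
  obtain ⟨Z, hZ⟩ := (finite_frontier_diff hg).exists_finset_coe
  have hZcard := card_le_card_add_one_of_injOn ((injOn_gapIndex hg).mono hZ.le)
  refine ⟨s.filter (fun t => 0 ≤ g t) ∪ Z, relu_comp_mem_piecewiseAffine hg hZ.ge,
    (Finset.card_union_le _ _).trans ?_⟩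
  by_cases hneg : ∃ t ∈ s, g t < 0
  · obtain ⟨t, ht, hgt⟩ := hneg
    have := Finset.card_lt_card (Finset.filter_ssubset.2 ⟨t, ht, hgt.not_ge⟩ :
      s.filter (fun t => 0 ≤ g t) ⊂ s)
    omega
  · push Not at hneg
    have := card_le_two_of_nonneg hg hneg hZ.le
    have := Finset.card_filter_le s (fun t => 0 ≤ g t)
    omega

end LastNeuron

def knotBound (n : ℕ → ℕ) : ℕ → ℕ
  | 0 => n 0
  | i + 1 => (n (i + 1) + 1) * knotBound n i + n (i + 1)

theorem le_knotBound (n : ℕ → ℕ) (i : ℕ) : n i ≤ knotBound n i := by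
  cases i with
  | zero => exact le_rfl
  | succ i => exact Nat.le_add_left _ _

theorem knotBound_eq_sum (n : ℕ → ℕ) (L : ℕ) :
    knotBound n L =
      ∑ i ∈ Finset.range (L + 1), n i * ∏ j ∈ Finset.Ico (i + 1) (L + 1), (n j + 1) := by
  induction L with
  | zero => simp [knotBound]
  | succ L ih =>
    have hprod : ∀ i ∈ Finset.range (L + 1),
        n i * ∏ j ∈ Finset.Ico (i + 1) (L + 2), (n j + 1) =
          n i * (∏ j ∈ Finset.Ico (i + 1) (L + 1), (n j + 1)) * (n (L + 1) + 1) := fun i hi => by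
      rw [Finset.prod_Ico_succ_top (by simpa using hi : i + 1 ≤ L + 1)]; ring
    rw [Finset.sum_range_succ, Finset.Ico_self, Finset.prod_empty, mul_one,
      Finset.sum_congr rfl hprod, ← Finset.sum_mul, ← ih, knotBound]
    ring

section Network

variable (n : ℕ → ℕ) (w1 b1 : Fin (n 0) → ℝ) (w : (i : ℕ) → Fin (n (i + 1)) → Fin (n i) → ℝ)
  (b : (i : ℕ) → Fin (n (i + 1)) → ℝ)

noncomputable def preactivation : (i : ℕ) → ℝ → Fin (n i) → ℝ
  | 0 => fun x k => w1 k * x + b1 k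
  | i + 1 => fun x k => ∑ j, w i k j * layerOut n w1 b1 w b i x j + b i k

theorem layerOut_eq_relu_preactivation (i : ℕ) (x : ℝ) (k : Fin (n i)) :
    layerOut n w1 b1 w b i x k = relu (preactivation n w1 b1 w b i x k) := by
  cases i <;> rfl

def LayerKnotsIn (i : ℕ) (K : Finset ℝ) : Prop :=
  ∀ k, (fun x => layerOut n w1 b1 w b i x k) ∈ piecewiseAffine K

variable {n w1 b1 w b}

theorem exists_layerKnotsIn_of_preactivation {i : ℕ} {s : Finset ℝ}
    (hs : ∀ k, (fun x => preactivation n w1 b1 w b i x k) ∈ piecewiseAffine s) :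
    ∃ K, LayerKnotsIn n w1 b1 w b i K ∧ K.card ≤ s.card + n i * (s.card + 1) := by
  simpa only [LayerKnotsIn, layerOut_eq_relu_preactivation, Fintype.card_fin] using
    exists_relu_mem hs

theorem preactivation_succ_mem {i : ℕ} {K : Finset ℝ} (hK : LayerKnotsIn n w1 b1 w b i K)
    (k : Fin (n (i + 1))) :
    (fun x => preactivation n w1 b1 w b (i + 1) x k) ∈ piecewiseAffine K :=
  sum_mul_add_mem_piecewiseAffine hK (w i k) (b i k)

theorem exists_layerKnotsIn_succ {i : ℕ} {K : Finset ℝ} (hK : LayerKnotsIn n w1 b1 w b i K) :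
    ∃ K', LayerKnotsIn n w1 b1 w b (i + 1) K' ∧ K'.card ≤ K.card + n (i + 1) * (K.card + 1) :=
  exists_layerKnotsIn_of_preactivation (preactivation_succ_mem hK)

variable (n w1 b1 w b)

theorem exists_preactivation_knots (i : ℕ) :
    ∃ s : Finset ℝ, (∀ k, (fun x => preactivation n w1 b1 w b i x k) ∈ piecewiseAffine s) ∧
      (n i + 1) * s.card + n i ≤ knotBound n i := by
  induction i with
  | zero => exact ⟨∅, fun k => affine_mem_piecewiseAffine (w1 k) (b1 k), by simp [knotBound]⟩
  | succ i ih =>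
    obtain ⟨s, hs, hscard⟩ := ih
    obtain ⟨K, hK, hKcard⟩ := exists_layerKnotsIn_of_preactivation hs
    refine ⟨K, preactivation_succ_mem hK, ?_⟩
    have : K.card ≤ knotBound n i := hKcard.trans (by linarith)
    calc (n (i + 1) + 1) * K.card + n (i + 1)
        ≤ (n (i + 1) + 1) * knotBound n i + n (i + 1) := by gcongr
      _ = knotBound n (i + 1) := rfl

theorem exists_layerKnotsIn (i : ℕ) :
    ∃ K, LayerKnotsIn n w1 b1 w b i K ∧ K.card ≤ knotBound n i := by
  obtain ⟨s, hs, hscard⟩ := exists_preactivation_knots n w1 b1 w b i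
  obtain ⟨K, hK, hKcard⟩ := exists_layerKnotsIn_of_preactivation hs
  exact ⟨K, hK, hKcard.trans (by linarith)⟩

variable {n w1 b1 w b}

theorem exists_layerKnotsIn_lt_of_le {i j : ℕ} {K : Finset ℝ} (hK : LayerKnotsIn n w1 b1 w b i K)
    (hKcard : K.card < knotBound n i) (hij : i ≤ j) :
    ∃ K', LayerKnotsIn n w1 b1 w b j K' ∧ K'.card < knotBound n j := by
  induction j, hij using Nat.le_induction with
  | base => exact ⟨K, hK, hKcard⟩
  | succ j _ ih =>
    obtain ⟨K₁, hK₁, hK₁card⟩ := ih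
    obtain ⟨K₂, hK₂, hK₂card⟩ := exists_layerKnotsIn_succ hK₁
    refine ⟨K₂, hK₂, hK₂card.trans_lt ?_⟩
    change _ < (n (j + 1) + 1) * knotBound n j + n (j + 1)
    nlinarith

theorem exists_layerKnotsIn_succ_lt_of_narrow {i : ℕ} (hi : n i = 1 ∨ n i = 2)
    (hi₁ : 1 ≤ n (i + 1)) :
    ∃ K, LayerKnotsIn n w1 b1 w b (i + 1) K ∧ K.card < knotBound n (i + 1) := by
  obtain ⟨s, hs, hscard⟩ := exists_preactivation_knots n w1 b1 w b i
  obtain ⟨A, hA, hcard⟩ := exists_narrow (by simpa using hi) hs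
  have hA : LayerKnotsIn n w1 b1 w b i A := fun k => by
    simpa only [layerOut_eq_relu_preactivation] using hA k
  simp only [Fintype.card_fin] at hcard
  rcases hcard with hlt | ⟨hle, hm⟩
  · exact exists_layerKnotsIn_lt_of_le hA (by omega) (Nat.le_succ i)
  · obtain ⟨K, hK, hKcard⟩ := exists_relu_mem_of_missesGap (preactivation_succ_mem hA) fun k => by
      show MissesGap A fun x => ∑ j, w i k j * layerOut n w1 b1 w b i x j + b i k
      simpa only [layerOut_eq_relu_preactivation] using hm (w i k) (b i k)
    refine ⟨K, hK, ?_⟩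
    change _ < (n (i + 1) + 1) * knotBound n i + n (i + 1)
    rw [Fintype.card_fin] at hKcard
    nlinarith

theorem exists_layerKnotsIn_succ_lt_of_eq_one {i : ℕ} (hi : n (i + 1) = 1)
    (hB : 2 ≤ knotBound n i) :
    ∃ K, LayerKnotsIn n w1 b1 w b (i + 1) K ∧ K.card < knotBound n (i + 1) := by
  obtain ⟨K, hK, hKcard⟩ := exists_layerKnotsIn n w1 b1 w b i
  obtain ⟨j₀, hj₀⟩ := Fintype.card_eq_one_iff.1 ((Fintype.card_fin _).trans hi)
  obtain ⟨A, hA, hAcard⟩ :=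
    exists_relu_mem_card_le_two_mul (preactivation_succ_mem hK j₀) hKcard hB
  refine ⟨A, fun k => hj₀ k ▸ hA, ?_⟩
  change _ < (n (i + 1) + 1) * knotBound n i + n (i + 1)
  rw [hi]
  omega

theorem setOf_not_differentiableAt_netOut_subset {l p : ℕ} {wOut : Fin p → Fin (n (l - 1)) → ℝ}
    {bOut : Fin p → ℝ} {K : Finset ℝ} (hK : LayerKnotsIn n w1 b1 w b (l - 1) K) :
    {x | ¬ DifferentiableAt ℝ (netOut l p n w1 b1 w b wOut bOut) x} ⊆ K := fun x hx => by
  by_contra hxK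
  exact hx (differentiableAt_pi.2 fun k => differentiableAt_of_mem_piecewiseAffine
    (sum_mul_add_mem_piecewiseAffine hK (wOut k) (bOut k)) hxK)

end Network

end ReLUNetwork

open ReLUNetwork

theorem knot_upper_bound_not_tight_general (l p : ℕ) (hl : 2 ≤ l)
    (n : ℕ → ℕ) (hn : ∀ i, i < l → 1 ≤ n i)
    (hnarrow : (∃ i, i < l - 1 ∧ n i < 3) ∨ n (l - 1) = 1)
    (w1 b1 : Fin (n 0) → ℝ)
    (w : (i : ℕ) → Fin (n (i + 1)) → Fin (n i) → ℝ)
    (b : (i : ℕ) → Fin (n (i + 1)) → ℝ)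
    (wOut : Fin p → Fin (n (l - 1)) → ℝ) (bOut : Fin p → ℝ) :
    {x : ℝ | ¬ DifferentiableAt ℝ (netOut l p n w1 b1 w b wOut bOut) x}.Finite ∧
    {x : ℝ | ¬ DifferentiableAt ℝ (netOut l p n w1 b1 w b wOut bOut) x}.ncard <
      ∑ i ∈ Finset.range l, n i * ∏ j ∈ Finset.Ico (i + 1) l, (n j + 1) := by
  obtain ⟨K, hK, hKcard⟩ :
      ∃ K, LayerKnotsIn n w1 b1 w b (l - 1) K ∧ K.card < knotBound n (l - 1) := by
    by_cases hmid : ∃ i, i < l - 1 ∧ n i < 3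
    · obtain ⟨i, hi, hni⟩ := hmid
      obtain ⟨K, hK, hKcard⟩ := exists_layerKnotsIn_succ_lt_of_narrow (w1 := w1) (b1 := b1)
        (w := w) (b := b) (by have := hn i (by omega); omega) (hn (i + 1) (by omega))
      exact exists_layerKnotsIn_lt_of_le hK hKcard (by omega)
    · obtain ⟨m, hm⟩ : ∃ m, l - 1 = m + 1 := ⟨l - 2, by omega⟩
      have hwide : 3 ≤ n m := not_lt.1 fun h => hmid ⟨m, by omega, h⟩
      rw [hm]
      exact exists_layerKnotsIn_succ_lt_of_eq_one (hm ▸ hnarrow.resolve_left hmid)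
        (by have := le_knotBound n m; omega)
  have hsub := setOf_not_differentiableAt_netOut_subset (wOut := wOut) (bOut := bOut) hK
  have hbound : knotBound n (l - 1) =
      ∑ i ∈ Finset.range l, n i * ∏ j ∈ Finset.Ico (i + 1) l, (n j + 1) := by
    rw [knotBound_eq_sum, Nat.sub_add_cancel (by omega : 1 ≤ l)]
  refine ⟨K.finite_toSet.subset hsub, hbound ▸ ?_⟩
  exact (Set.ncard_le_ncard hsub K.finite_toSet).trans_lt (by rwa [Set.ncard_coe_finset])

/-- **Corollary (the bound is not tight for narrow layers).** For an `l`-layer (`l ≥ 2`)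
`ℝ → ℝ^p` ReLU network, if some hidden layer before the last has fewer than 3 neurons,
or the last hidden layer has exactly 1 neuron, then for every choice of weights and
biases the number of knots is strictly less than
`∑_{i=1}^{l} n_i ∏_{j=i+1}^{l} (n_j + 1)` (here 0-indexed). -/
theorem knot_upper_bound_not_tight (l p : ℕ) (hl : 2 ≤ l) (hp : 1 ≤ p)
    (n : ℕ → ℕ) (hn : ∀ i, i < l → 1 ≤ n i)
    (hnarrow : (∃ i, i < l - 1 ∧ n i < 3) ∨ n (l - 1) = 1)
    (w1 b1 : Fin (n 0) → ℝ)
    (w : (i : ℕ) → Fin (n (i + 1)) → Fin (n i) → ℝ)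
    (b : (i : ℕ) → Fin (n (i + 1)) → ℝ)
    (wOut : Fin p → Fin (n (l - 1)) → ℝ) (bOut : Fin p → ℝ) :
    {x : ℝ | ¬ DifferentiableAt ℝ (netOut l p n w1 b1 w b wOut bOut) x}.Finite ∧
    {x : ℝ | ¬ DifferentiableAt ℝ (netOut l p n w1 b1 w b wOut bOut) x}.ncard <
      ∑ i ∈ Finset.range l, n i * ∏ j ∈ Finset.Ico (i + 1) l, (n j + 1) :=
  knot_upper_bound_not_tight_general l p hl n hn hnarrow w1 b1 w b wOut bOut
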